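/- Let 𝓜 be a finite nonempty model class over a finite policy class Π. Then for every γ > 0, dec̄_γ(𝓜) ≤ max_{M̄∈𝓜} psc_{γ/6}(𝓜, M̄) + 2(H+1)/γ. -/

import Mathlib

open MeasureTheory ProbabilityTheory

noncomputable section

/-- Squared Hellinger distance between two measures, computed with respect to the
(dominating) measure `P + Q`. -/
def hellingerSq {Ω : Type*} [MeasurableSpace Ω] (P Q : Measure Ω) : ℝ :=
  ∫ x, (Real.sqrt ((P.rnDeriv (P + Q) x).toReal)
      - Real.sqrt ((Q.rnDeriv (P + Q) x).toReal)) ^ 2 ∂(P + Q)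

section AuxMeasure

variable {O : Type*} [MeasurableSpace O]

lemma integrable_of_bdd {P : Measure O} [IsFiniteMeasure P] {g : O → ℝ} {C : ℝ}
    (hm : Measurable g) (hC : ∀ x, |g x| ≤ C) : Integrable g P :=
  (integrable_const C).mono' hm.aestronglyMeasurable
    (Filter.Eventually.of_forall (fun x => by simpa [Real.norm_eq_abs] using hC x))

lemma abs_cont_left (P Q : Measure O) : P ≪ P + Q :=
  Measure.AbsolutelyContinuous.mk fun s _ h0 => by
    have : P s + Q s = 0 := by simpa [Measure.add_apply] using h0
    simpa using (add_eq_zero.mp this).1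

lemma abs_cont_right (P Q : Measure O) : Q ≪ P + Q :=
  Measure.AbsolutelyContinuous.mk fun s _ h0 => by
    have : P s + Q s = 0 := by simpa [Measure.add_apply] using h0
    simpa using (add_eq_zero.mp this).2

lemma hellingerSq_nonneg (P Q : Measure O) : 0 ≤ hellingerSq P Q :=
  integral_nonneg fun x => sq_nonneg _

end AuxMeasure

section Pair

variable {O : Type*} [MeasurableSpace O]

lemma hellingerSq_comm (P Q : Measure O) : hellingerSq P Q = hellingerSq Q P := by
  simp only [hellingerSq]
  rw [add_comm Q P]
  congr 1
  funext x
  ring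

variable (P Q : Measure O) [IsProbabilityMeasure P] [IsProbabilityMeasure Q]

lemma integral_sub_le_hellinger
    {g : O → ℝ} (hgm : Measurable g) (hg0 : ∀ x, 0 ≤ g x) (hg1 : ∀ x, g x ≤ 1)
    {β : ℝ} (hβ : 0 < β) :
    ∫ x, g x ∂P - ∫ x, g x ∂Q ≤ β * hellingerSq P Q + 1 / β := by
  set μ : Measure O := P + Q with hμdef
  have hP : P ≪ μ := abs_cont_left P Q
  have hQ : Q ≪ μ := abs_cont_right P Q
  set p : O → ℝ := fun x => (P.rnDeriv μ x).toReal with hpdef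
  set q : O → ℝ := fun x => (Q.rnDeriv μ x).toReal with hqdef
  have hpm : Measurable p := (Measure.measurable_rnDeriv P μ).ennreal_toReal
  have hqm : Measurable q := (Measure.measurable_rnDeriv Q μ).ennreal_toReal
  have hp0 : ∀ x, 0 ≤ p x := fun x => ENNReal.toReal_nonneg
  have hq0 : ∀ x, 0 ≤ q x := fun x => ENNReal.toReal_nonneg
  have hip : Integrable p μ := Measure.integrable_toReal_rnDeriv
  have hiq : Integrable q μ := Measure.integrable_toReal_rnDeriv
  have hIp : ∫ x, p x ∂μ = 1 := by
    rw [hpdef]; rw [Measure.integral_toReal_rnDeriv hP]; simp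
  have hIq : ∫ x, q x ∂μ = 1 := by
    rw [hqdef]; rw [Measure.integral_toReal_rnDeriv hQ]; simp
  have hgint : Integrable g P := integrable_of_bdd hgm
    (fun x => by rw [abs_of_nonneg (hg0 x)]; exact hg1 x)
  have hgintQ : Integrable g Q := integrable_of_bdd hgm
    (fun x => by rw [abs_of_nonneg (hg0 x)]; exact hg1 x)
  have hgP : ∫ x, g x ∂P = ∫ x, p x * g x ∂μ := by
    have := integral_rnDeriv_smul (μ := P) (ν := μ) hP (f := g)
    simp only [smul_eq_mul] at this
    exact this.symm
  have hgQ : ∫ x, g x ∂Q = ∫ x, q x * g x ∂μ := by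
    have := integral_rnDeriv_smul (μ := Q) (ν := μ) hQ (f := g)
    simp only [smul_eq_mul] at this
    exact this.symm
  have hipg : Integrable (fun x => p x * g x) μ := by
    have := (integrable_rnDeriv_smul_iff (E := ℝ) hP (f := g)).2 hgint
    simpa [smul_eq_mul] using this
  have hiqg : Integrable (fun x => q x * g x) μ := by
    have := (integrable_rnDeriv_smul_iff (E := ℝ) hQ (f := g)).2 hgintQ
    simpa [smul_eq_mul] using this
  set a : O → ℝ := fun x => Real.sqrt (p x) with hadef
  set b : O → ℝ := fun x => Real.sqrt (q x) with hbdef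
  have ham : Measurable a := hpm.sqrt
  have hbm : Measurable b := hqm.sqrt
  have ha2 : ∀ x, a x ^ 2 = p x := fun x => Real.sq_sqrt (hp0 x)
  have hb2 : ∀ x, b x ^ 2 = q x := fun x => Real.sq_sqrt (hq0 x)
  have hipq2 : Integrable (fun x => 2 * (p x + q x)) μ := (hip.add hiq).const_mul 2
  have hd2int : Integrable (fun x => (a x - b x) ^ 2) μ := by
    refine hipq2.mono' ((ham.sub hbm).pow_const 2).aestronglyMeasurable
      (Filter.Eventually.of_forall fun x => ?_)
    rw [Real.norm_eq_abs, abs_of_nonneg (sq_nonneg _)]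
    nlinarith [ha2 x, hb2 x, sq_nonneg (a x + b x)]
  have hhell : hellingerSq P Q = ∫ x, (a x - b x) ^ 2 ∂μ := by
    simp only [hellingerSq, hadef, hbdef, hpdef, hqdef, hμdef]
  have hpoint : ∀ x, (p x - q x) * g x ≤ β * (a x - b x) ^ 2 + (2*β)⁻¹ * (p x + q x) := by
    intro x
    have h1 : p x - q x = (a x - b x) * (a x + b x) := by nlinarith [ha2 x, hb2 x]
    have hg0x := hg0 x; have hg1x := hg1 x
    have ha0 : 0 ≤ a x := Real.sqrt_nonneg _
    have hb0 : 0 ≤ b x := Real.sqrt_nonneg _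
    have hgsq : g x ^ 2 ≤ 1 := by nlinarith
    have hs2 : (a x + b x) ^ 2 ≤ 2 * (p x + q x) := by
      nlinarith [sq_nonneg (a x - b x), ha2 x, hb2 x]
    have h2 : ((a x + b x) * g x) ^ 2 ≤ 2 * (p x + q x) := by
      have h2' : ((a x + b x) * g x) ^ 2 = (a x + b x) ^ 2 * g x ^ 2 := by ring
      rw [h2']
      calc (a x + b x) ^ 2 * g x ^ 2 ≤ (2 * (p x + q x)) * 1 :=
            mul_le_mul hs2 hgsq (sq_nonneg _) (by nlinarith [hp0 x, hq0 x])
        _ = 2 * (p x + q x) := by ring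
    have hgoal : 4 * β * ((p x - q x) * g x)
        ≤ 4 * β * (β * (a x - b x) ^ 2 + (2*β)⁻¹ * (p x + q x)) := by
      have hexp : 4 * β * (β * (a x - b x) ^ 2 + (2*β)⁻¹ * (p x + q x))
          = 4 * β^2 * (a x - b x) ^ 2 + 2 * (p x + q x) := by
        field_simp
        ring
      rw [hexp, h1]
      nlinarith [sq_nonneg (2 * β * (a x - b x) - (a x + b x) * g x), h2]
    exact le_of_mul_le_mul_left hgoal (by positivity)
  have hsubint : Integrable (fun x => (p x - q x) * g x) μ :=
    (hipg.sub hiqg).congr (Filter.Eventually.of_forall fun x => by simp only [Pi.sub_apply]; ring)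
  have hmain : ∫ x, g x ∂P - ∫ x, g x ∂Q = ∫ x, (p x - q x) * g x ∂μ := by
    rw [hgP, hgQ, ← integral_sub hipg hiqg]
    congr 1; funext x; ring
  rw [hmain]
  have i1 : Integrable (fun x => β * (a x - b x) ^ 2) μ := hd2int.const_mul β
  have i2 : Integrable (fun x => (2*β)⁻¹ * (p x + q x)) μ := by
    have : Integrable (fun x => p x + q x) μ := hip.add hiq
    exact this.const_mul _
  calc ∫ x, (p x - q x) * g x ∂μ
      ≤ ∫ x, (β * (a x - b x) ^ 2 + (2*β)⁻¹ * (p x + q x)) ∂μ :=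
        integral_mono hsubint (i1.add i2) hpoint
    _ = β * ∫ x, (a x - b x) ^ 2 ∂μ + (2*β)⁻¹ * (∫ x, p x ∂μ + ∫ x, q x ∂μ) := by
        rw [integral_add i1 i2, integral_const_mul, integral_const_mul,
          integral_add hip hiq]
    _ = β * hellingerSq P Q + 1 / β := by
        rw [hIp, hIq, hhell]
        field_simp
        ring

end Pair

section Pair2
variable {O : Type*} [MeasurableSpace O]
variable (P Q : Measure O) [IsProbabilityMeasure P] [IsProbabilityMeasure Q]

lemma integral_le_change_measure
    {g : O → ℝ} (hgm : Measurable g) (hg0 : ∀ x, 0 ≤ g x) {c : ℝ} (hc : 0 ≤ c)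
    (hgc : ∀ x, g x ≤ c) :
    ∫ x, g x ∂Q ≤ 3 * ∫ x, g x ∂P + (3/2) * c * hellingerSq P Q := by
  set μ : Measure O := P + Q with hμdef
  have hP : P ≪ μ := abs_cont_left P Q
  have hQ : Q ≪ μ := abs_cont_right P Q
  set p : O → ℝ := fun x => (P.rnDeriv μ x).toReal with hpdef
  set q : O → ℝ := fun x => (Q.rnDeriv μ x).toReal with hqdef
  have hpm : Measurable p := (Measure.measurable_rnDeriv P μ).ennreal_toReal
  have hqm : Measurable q := (Measure.measurable_rnDeriv Q μ).ennreal_toReal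
  have hp0 : ∀ x, 0 ≤ p x := fun x => ENNReal.toReal_nonneg
  have hq0 : ∀ x, 0 ≤ q x := fun x => ENNReal.toReal_nonneg
  have hip : Integrable p μ := Measure.integrable_toReal_rnDeriv
  have hiq : Integrable q μ := Measure.integrable_toReal_rnDeriv
  have hgint : Integrable g P := integrable_of_bdd hgm
    (fun x => by rw [abs_of_nonneg (hg0 x)]; exact hgc x)
  have hgintQ : Integrable g Q := integrable_of_bdd hgm
    (fun x => by rw [abs_of_nonneg (hg0 x)]; exact hgc x)
  have hgP : ∫ x, g x ∂P = ∫ x, p x * g x ∂μ := by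
    have := integral_rnDeriv_smul (μ := P) (ν := μ) hP (f := g)
    simp only [smul_eq_mul] at this
    exact this.symm
  have hgQ : ∫ x, g x ∂Q = ∫ x, q x * g x ∂μ := by
    have := integral_rnDeriv_smul (μ := Q) (ν := μ) hQ (f := g)
    simp only [smul_eq_mul] at this
    exact this.symm
  have hipg : Integrable (fun x => p x * g x) μ := by
    have := (integrable_rnDeriv_smul_iff (E := ℝ) hP (f := g)).2 hgint
    simpa [smul_eq_mul] using this
  have hiqg : Integrable (fun x => q x * g x) μ := by
    have := (integrable_rnDeriv_smul_iff (E := ℝ) hQ (f := g)).2 hgintQ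
    simpa [smul_eq_mul] using this
  set a : O → ℝ := fun x => Real.sqrt (p x) with hadef
  set b : O → ℝ := fun x => Real.sqrt (q x) with hbdef
  have ham : Measurable a := hpm.sqrt
  have hbm : Measurable b := hqm.sqrt
  have ha2 : ∀ x, a x ^ 2 = p x := fun x => Real.sq_sqrt (hp0 x)
  have hb2 : ∀ x, b x ^ 2 = q x := fun x => Real.sq_sqrt (hq0 x)
  have hipq2 : Integrable (fun x => 2 * (p x + q x)) μ := (hip.add hiq).const_mul 2
  have hd2int : Integrable (fun x => (a x - b x) ^ 2) μ := by
    refine hipq2.mono' ((ham.sub hbm).pow_const 2).aestronglyMeasurable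
      (Filter.Eventually.of_forall fun x => ?_)
    rw [Real.norm_eq_abs, abs_of_nonneg (sq_nonneg _)]
    nlinarith [ha2 x, hb2 x, sq_nonneg (a x + b x)]
  have hhell : hellingerSq P Q = ∫ x, (a x - b x) ^ 2 ∂μ := by
    simp only [hellingerSq, hadef, hbdef, hpdef, hqdef, hμdef]
  have hpoint : ∀ x, q x * g x ≤ 3 * (p x * g x) + (3/2) * c * (a x - b x) ^ 2 := by
    intro x
    have ha0 : 0 ≤ a x := Real.sqrt_nonneg _
    have hb0 : 0 ≤ b x := Real.sqrt_nonneg _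
    have hq3 : q x ≤ 3 * p x + (3/2) * (a x - b x) ^ 2 := by
      nlinarith [ha2 x, hb2 x, sq_nonneg (3 * a x - b x)]
    have hg0x := hg0 x; have hgcx := hgc x
    have h1 : q x * g x ≤ (3 * p x + (3/2) * (a x - b x) ^ 2) * g x :=
      mul_le_mul_of_nonneg_right hq3 hg0x
    have h2 : (3/2) * (a x - b x) ^ 2 * g x ≤ (3/2) * c * (a x - b x) ^ 2 := by
      nlinarith [sq_nonneg (a x - b x), hg0x, hgcx]
    nlinarith [h1, h2]
  have i1 : Integrable (fun x => 3 * (p x * g x)) μ := hipg.const_mul 3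
  have i2 : Integrable (fun x => (3/2) * c * (a x - b x) ^ 2) μ := hd2int.const_mul _
  calc ∫ x, g x ∂Q = ∫ x, q x * g x ∂μ := hgQ
    _ ≤ ∫ x, (3 * (p x * g x) + (3/2) * c * (a x - b x) ^ 2) ∂μ :=
        integral_mono hiqg (i1.add i2) hpoint
    _ = 3 * ∫ x, p x * g x ∂μ + (3/2) * c * ∫ x, (a x - b x) ^ 2 ∂μ := by
        rw [integral_add i1 i2, integral_const_mul, integral_const_mul]
    _ = 3 * ∫ x, g x ∂P + (3/2) * c * hellingerSq P Q := by rw [hgP, hhell]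

lemma hellingerSq_le_two : hellingerSq P Q ≤ 2 := by
  set μ : Measure O := P + Q with hμdef
  have hP : P ≪ μ := abs_cont_left P Q
  have hQ : Q ≪ μ := abs_cont_right P Q
  set p : O → ℝ := fun x => (P.rnDeriv μ x).toReal with hpdef
  set q : O → ℝ := fun x => (Q.rnDeriv μ x).toReal with hqdef
  have hpm : Measurable p := (Measure.measurable_rnDeriv P μ).ennreal_toReal
  have hqm : Measurable q := (Measure.measurable_rnDeriv Q μ).ennreal_toReal
  have hp0 : ∀ x, 0 ≤ p x := fun x => ENNReal.toReal_nonneg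
  have hq0 : ∀ x, 0 ≤ q x := fun x => ENNReal.toReal_nonneg
  have hip : Integrable p μ := Measure.integrable_toReal_rnDeriv
  have hiq : Integrable q μ := Measure.integrable_toReal_rnDeriv
  have hIp : ∫ x, p x ∂μ = 1 := by
    rw [hpdef]; rw [Measure.integral_toReal_rnDeriv hP]; simp
  have hIq : ∫ x, q x ∂μ = 1 := by
    rw [hqdef]; rw [Measure.integral_toReal_rnDeriv hQ]; simp
  set a : O → ℝ := fun x => Real.sqrt (p x) with hadef
  set b : O → ℝ := fun x => Real.sqrt (q x) with hbdef
  have ham : Measurable a := hpm.sqrt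
  have hbm : Measurable b := hqm.sqrt
  have ha2 : ∀ x, a x ^ 2 = p x := fun x => Real.sq_sqrt (hp0 x)
  have hb2 : ∀ x, b x ^ 2 = q x := fun x => Real.sq_sqrt (hq0 x)
  have hipq : Integrable (fun x => p x + q x) μ := hip.add hiq
  have hd2int : Integrable (fun x => (a x - b x) ^ 2) μ := by
    refine (hipq.const_mul 2).mono' ((ham.sub hbm).pow_const 2).aestronglyMeasurable
      (Filter.Eventually.of_forall fun x => ?_)
    rw [Real.norm_eq_abs, abs_of_nonneg (sq_nonneg _)]
    nlinarith [ha2 x, hb2 x, sq_nonneg (a x + b x)]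
  have hhell : hellingerSq P Q = ∫ x, (a x - b x) ^ 2 ∂μ := by
    simp only [hellingerSq, hadef, hbdef, hpdef, hqdef, hμdef]
  rw [hhell]
  calc ∫ x, (a x - b x) ^ 2 ∂μ ≤ ∫ x, (p x + q x) ∂μ := by
        refine integral_mono hd2int hipq fun x => ?_
        nlinarith [ha2 x, hb2 x, Real.sqrt_nonneg (p x), Real.sqrt_nonneg (q x)]
    _ = 2 := by rw [integral_add hip hiq, hIp, hIq]; norm_num

end Pair2

/-- A model in the DMSO framework. -/
structure Model (O : Type*) [MeasurableSpace O] (H : ℕ) (Pol : Type*) where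
  P : Pol → Measure O
  prob : ∀ π, IsProbabilityMeasure (P π)
  R : O → Fin H → ℝ
  measR : ∀ h, Measurable fun o => R o h
  R_nonneg : ∀ o h, 0 ≤ R o h
  R_le_one : ∀ o h, R o h ≤ 1
  sumR_le_one : ∀ o, ∑ h, R o h ≤ 1

variable {O : Type*} [MeasurableSpace O] {H : ℕ} {Pol : Type*}

/-- The value `f^M(π)` of policy `π` in model `M`. -/
def Model.val (M : Model O H Pol) (π : Pol) : ℝ :=
  ∫ o, (∑ h, M.R o h) ∂(M.P π)

/-- The divergence `D_RL²(M(π), M'(π))`. -/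
def DRL2 (M M' : Model O H Pol) (π : Pol) : ℝ :=
  hellingerSq (M.P π) (M'.P π)
    + ∫ o, (∑ h, (M.R o h - M'.R o h) ^ 2) ∂(M.P π)

section ModelAux

lemma Model.measurable_sumR (M : Model O H Pol) : Measurable fun o => ∑ h, M.R o h :=
  Finset.measurable_sum Finset.univ (fun h _ => M.measR h)

lemma Model.sumR_nonneg (M : Model O H Pol) (o : O) : 0 ≤ ∑ h, M.R o h :=
  Finset.sum_nonneg fun h _ => M.R_nonneg o h

lemma Model.measurable_dsq (M N : Model O H Pol) :
    Measurable fun o => ∑ h, (M.R o h - N.R o h) ^ 2 :=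
  Finset.measurable_sum Finset.univ (fun h _ => ((M.measR h).sub (N.measR h)).pow_const 2)

lemma Model.dsq_nonneg (M N : Model O H Pol) (o : O) :
    0 ≤ ∑ h, (M.R o h - N.R o h) ^ 2 :=
  Finset.sum_nonneg fun h _ => sq_nonneg _

lemma Model.dsq_le_two (M N : Model O H Pol) (o : O) :
    ∑ h, (M.R o h - N.R o h) ^ 2 ≤ 2 := by
  have h1 : ∀ h : Fin H, (M.R o h - N.R o h) ^ 2 ≤ M.R o h + N.R o h := by
    intro h
    nlinarith [M.R_nonneg o h, N.R_nonneg o h, M.R_le_one o h, N.R_le_one o h]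
  calc ∑ h, (M.R o h - N.R o h) ^ 2 ≤ ∑ h, (M.R o h + N.R o h) :=
        Finset.sum_le_sum fun h _ => h1 h
    _ = (∑ h, M.R o h) + ∑ h, N.R o h := Finset.sum_add_distrib
    _ ≤ 2 := by linarith [M.sumR_le_one o, N.sumR_le_one o]

lemma Model.val_nonneg (M : Model O H Pol) (π : Pol) : 0 ≤ M.val π :=
  integral_nonneg fun o => M.sumR_nonneg o

lemma Model.val_le_one (M : Model O H Pol) (π : Pol) : M.val π ≤ 1 := by
  haveI := M.prob π
  have : Integrable (fun o => ∑ h, M.R o h) (M.P π) := integrable_of_bdd M.measurable_sumR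
    (C := 1) (fun o => by rw [abs_of_nonneg (M.sumR_nonneg o)]; exact M.sumR_le_one o)
  calc M.val π ≤ ∫ _, (1:ℝ) ∂(M.P π) :=
        integral_mono this (integrable_const 1) (fun o => M.sumR_le_one o)
    _ = 1 := by simp

/-- reward part of DRL2 is in `[0,2]`; and DRL2 bounds. -/
lemma Model.rpart_nonneg (M N : Model O H Pol) (π : Pol) :
    0 ≤ ∫ o, (∑ h, (M.R o h - N.R o h) ^ 2) ∂(M.P π) :=
  integral_nonneg fun o => M.dsq_nonneg N o

lemma Model.rpart_le_two (M N : Model O H Pol) (π : Pol) :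
    ∫ o, (∑ h, (M.R o h - N.R o h) ^ 2) ∂(M.P π) ≤ 2 := by
  haveI := M.prob π
  have hint : Integrable (fun o => ∑ h, (M.R o h - N.R o h) ^ 2) (M.P π) :=
    integrable_of_bdd (M.measurable_dsq N) (C := 2)
      (fun o => by rw [abs_of_nonneg (M.dsq_nonneg N o)]; exact M.dsq_le_two N o)
  calc ∫ o, (∑ h, (M.R o h - N.R o h) ^ 2) ∂(M.P π) ≤ ∫ _, (2:ℝ) ∂(M.P π) :=
        integral_mono hint (integrable_const 2) (fun o => M.dsq_le_two N o)
    _ = 2 := by simp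

lemma DRL2_nonneg (M N : Model O H Pol) (π : Pol) : 0 ≤ DRL2 M N π := by
  haveI := M.prob π; haveI := N.prob π
  exact add_nonneg (hellingerSq_nonneg _ _) (M.rpart_nonneg N π)

lemma DRL2_le_four (M N : Model O H Pol) (π : Pol) : DRL2 M N π ≤ 4 := by
  haveI := M.prob π; haveI := N.prob π
  have := hellingerSq_le_two (M.P π) (N.P π)
  have := M.rpart_le_two N π
  unfold DRL2; linarith

/-- Lemma B : reversed reward part. -/
lemma rev_reward_le (M N : Model O H Pol) (π : Pol) :
    (∫ o, (∑ h, (N.R o h - M.R o h) ^ 2) ∂(N.P π)) ≤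
      3 * (∫ o, (∑ h, (M.R o h - N.R o h) ^ 2) ∂(M.P π))
        + 3 * hellingerSq (M.P π) (N.P π) := by
  haveI := M.prob π; haveI := N.prob π
  have hrw : (∫ o, (∑ h, (N.R o h - M.R o h) ^ 2) ∂(N.P π))
      = ∫ o, (∑ h, (M.R o h - N.R o h) ^ 2) ∂(N.P π) := by
    congr 1; funext o; exact Finset.sum_congr rfl fun h _ => by ring
  rw [hrw]
  have := integral_le_change_measure (M.P π) (N.P π) (M.measurable_dsq N)
    (fun o => M.dsq_nonneg N o) (by norm_num : (0:ℝ) ≤ 2) (fun o => M.dsq_le_two N o)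
  linarith

/-- Lemma A : value difference bound. -/
lemma val_diff_le (M N : Model O H Pol) (π : Pol) (hH : 0 < H)
    {αr αh : ℝ} (hαr : 0 < αr) (hαh : 0 < αh) :
    N.val π - M.val π ≤
      αr * (∫ o, (∑ h, (M.R o h - N.R o h) ^ 2) ∂(M.P π)) + (H : ℝ) / (4 * αr)
        + (αh * hellingerSq (M.P π) (N.P π) + 1 / αh) := by
  haveI := M.prob π; haveI := N.prob π
  have hint_gN_P : Integrable (fun o => ∑ h, N.R o h) (M.P π) :=
    integrable_of_bdd N.measurable_sumR (C := 1)
      (fun o => by rw [abs_of_nonneg (N.sumR_nonneg o)]; exact N.sumR_le_one o)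
  have hint_gM_P : Integrable (fun o => ∑ h, M.R o h) (M.P π) :=
    integrable_of_bdd M.measurable_sumR (C := 1)
      (fun o => by rw [abs_of_nonneg (M.sumR_nonneg o)]; exact M.sumR_le_one o)
  have hint_dsq : Integrable (fun o => ∑ h, (M.R o h - N.R o h) ^ 2) (M.P π) :=
    integrable_of_bdd (M.measurable_dsq N) (C := 2)
      (fun o => by rw [abs_of_nonneg (M.dsq_nonneg N o)]; exact M.dsq_le_two N o)
  -- part 1 : ∫ S_N dQ - ∫ S_N dP ≤ αh h + 1/αh
  have h1 : (∫ o, (∑ h, N.R o h) ∂(N.P π)) - (∫ o, (∑ h, N.R o h) ∂(M.P π))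
      ≤ αh * hellingerSq (M.P π) (N.P π) + 1 / αh := by
    have := integral_sub_le_hellinger (N.P π) (M.P π) N.measurable_sumR
      (fun o => N.sumR_nonneg o) (fun o => N.sumR_le_one o) hαh
    rw [hellingerSq_comm (N.P π) (M.P π)] at this
    exact this
  -- part 2 : ∫ (S_N - S_M) dP ≤ αr ∫ dsq dP + H/(4 αr)
  have hpoint : ∀ o, (∑ h, N.R o h) - (∑ h, M.R o h)
      ≤ αr * (∑ h, (M.R o h - N.R o h) ^ 2) + (H : ℝ) / (4 * αr) := by
    intro o
    have hHpos : (0:ℝ) < H := by exact_mod_cast hH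
    set x : ℝ := (∑ h, N.R o h) - (∑ h, M.R o h) with hxdef
    have hx2 : x ^ 2 ≤ (H : ℝ) * ∑ h, (M.R o h - N.R o h) ^ 2 := by
      have hxs : x = -∑ h, (M.R o h - N.R o h) := by
        rw [hxdef, ← Finset.sum_sub_distrib]
        rw [← Finset.sum_neg_distrib]
        exact Finset.sum_congr rfl fun h _ => by ring
      have := sq_sum_le_card_mul_sum_sq
        (s := (Finset.univ : Finset (Fin H))) (f := fun h => M.R o h - N.R o h)
      rw [hxs, neg_pow]
      simpa [Finset.card_univ] using this
    have hkey : 4 * αr * (H:ℝ) * x ≤ 4 * αr * (H:ℝ) *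
        (αr * (∑ h, (M.R o h - N.R o h) ^ 2) + (H : ℝ) / (4 * αr)) := by
      have hexp : 4 * αr * (H:ℝ) * (αr * (∑ h, (M.R o h - N.R o h) ^ 2) + (H : ℝ) / (4 * αr))
          = 4 * αr^2 * (H:ℝ) * (∑ h, (M.R o h - N.R o h) ^ 2) + (H:ℝ)^2 := by
        field_simp
      rw [hexp]
      nlinarith [sq_nonneg (2 * αr * x - (H:ℝ)), hx2, mul_pos (mul_pos (by norm_num : (0:ℝ)<4) hαr) hHpos]
    exact le_of_mul_le_mul_left hkey (by positivity)
  have h2 : (∫ o, (∑ h, N.R o h) ∂(M.P π)) - (∫ o, (∑ h, M.R o h) ∂(M.P π))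
      ≤ αr * (∫ o, (∑ h, (M.R o h - N.R o h) ^ 2) ∂(M.P π)) + (H : ℝ) / (4 * αr) := by
    rw [← integral_sub hint_gN_P hint_gM_P]
    have iR : Integrable (fun o => αr * (∑ h, (M.R o h - N.R o h) ^ 2) + (H : ℝ) / (4 * αr))
        (M.P π) := (hint_dsq.const_mul αr).add (integrable_const _)
    calc ∫ o, ((∑ h, N.R o h) - (∑ h, M.R o h)) ∂(M.P π)
        ≤ ∫ o, (αr * (∑ h, (M.R o h - N.R o h) ^ 2) + (H : ℝ) / (4 * αr)) ∂(M.P π) :=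
          integral_mono (hint_gN_P.sub hint_gM_P) iR hpoint
      _ = αr * (∫ o, (∑ h, (M.R o h - N.R o h) ^ 2) ∂(M.P π)) + (H : ℝ) / (4 * αr) := by
          rw [integral_add (hint_dsq.const_mul αr) (integrable_const _), integral_const_mul,
            integral_const]
          simp
  have hval : N.val π - M.val π = ((∫ o, (∑ h, N.R o h) ∂(N.P π)) - (∫ o, (∑ h, N.R o h) ∂(M.P π)))
      + ((∫ o, (∑ h, N.R o h) ∂(M.P π)) - (∫ o, (∑ h, M.R o h) ∂(M.P π))) := by
    unfold Model.val; ring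
  rw [hval]; linarith

end ModelAux

/-- The set `Δ(ι)` of probability distributions on a finite set `ι`. -/
def ProbDist (ι : Type*) [Fintype ι] : Type _ :=
  {p : ι → ℝ // (∀ i, 0 ≤ p i) ∧ ∑ i, p i = 1}

section PD

variable {κ : Type*} [Fintype κ]

instance instNonemptyProbDist [Nonempty κ] : Nonempty (ProbDist κ) := by
  refine ⟨⟨fun _ => (Fintype.card κ : ℝ)⁻¹, fun _ => by positivity, ?_⟩⟩
  rw [Finset.sum_const, Finset.card_univ, nsmul_eq_mul]
  exact mul_inv_cancel₀ (by exact_mod_cast Fintype.card_ne_zero)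

lemma weighted_le (w : κ → ℝ) (hw0 : ∀ i, 0 ≤ w i) (hw1 : ∑ i, w i = 1)
    {t : κ → ℝ} {C : ℝ} (ht : ∀ i, t i ≤ C) : ∑ i, w i * t i ≤ C := by
  calc ∑ i, w i * t i ≤ ∑ i, w i * C :=
        Finset.sum_le_sum fun i _ => mul_le_mul_of_nonneg_left (ht i) (hw0 i)
    _ = C := by rw [← Finset.sum_mul, hw1, one_mul]

lemma le_weighted (w : κ → ℝ) (hw0 : ∀ i, 0 ≤ w i) (hw1 : ∑ i, w i = 1)
    {t : κ → ℝ} {C : ℝ} (ht : ∀ i, C ≤ t i) : C ≤ ∑ i, w i * t i := by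
  have := weighted_le w hw0 hw1 (t := fun i => -t i) (C := -C)
    (fun i => by simpa using neg_le_neg (ht i))
  have h2 : ∑ i, w i * (-t i) = -∑ i, w i * t i := by
    rw [← Finset.sum_neg_distrib]
    exact Finset.sum_congr rfl fun i _ => by ring
  rw [h2] at this
  linarith

/-- argmin over the support of a probability vector. -/
lemma exists_min_weighted (m : κ → ℝ) (hm0 : ∀ i, 0 ≤ m i) (hm1 : ∑ i, m i = 1)
    (Φ : κ → ℝ) : ∃ k, Φ k ≤ ∑ j, m j * Φ j := by
  classical
  set s : Finset κ := Finset.univ.filter (fun j => m j ≠ 0) with hs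
  have hsne : s.Nonempty := by
    by_contra hne
    rw [Finset.not_nonempty_iff_eq_empty] at hne
    have : ∑ i, m i = 0 := by
      refine Finset.sum_eq_zero fun i _ => ?_
      by_contra hmi
      have : i ∈ s := by simp [hs, hmi]
      rw [hne] at this; exact absurd this (Finset.notMem_empty i)
    rw [hm1] at this; norm_num at this
  obtain ⟨k, hk, hkmin⟩ := s.exists_min_image Φ hsne
  refine ⟨k, ?_⟩
  have h1 : ∑ j, m j * Φ j = ∑ j ∈ s, m j * Φ j := by
    refine (Finset.sum_subset (Finset.subset_univ s) fun j _ hj => ?_).symm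
    have : m j = 0 := by by_contra h0; exact hj (by simp [hs, h0])
    rw [this, zero_mul]
  have h2 : ∑ j, m j = ∑ j ∈ s, m j := by
    refine (Finset.sum_subset (Finset.subset_univ s) fun j _ hj => ?_).symm
    by_contra h0; exact hj (by simp [hs, h0])
  have h3 : ∑ j ∈ s, m j * Φ k ≤ ∑ j ∈ s, m j * Φ j :=
    Finset.sum_le_sum fun j hj => mul_le_mul_of_nonneg_left (hkmin j hj) (hm0 j)
  have h4 : ∑ j ∈ s, m j * Φ k = Φ k := by
    rw [← Finset.sum_mul, ← h2, hm1, one_mul]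
  rw [h1]; linarith

end PD

section Minimax

variable {ι κ : Type*} [Fintype ι] [Fintype κ] [Nonempty ι] [Nonempty κ]

lemma pi_decomp [DecidableEq ι] (f : (ι → ℝ) →L[ℝ] ℝ) (x : ι → ℝ) :
    f x = ∑ i, x i * f (Pi.single i 1) := by
  conv_lhs => rw [← Finset.univ_sum_single x]
  rw [map_sum]
  refine Finset.sum_congr rfl fun i _ => ?_
  have h1 : Pi.single i (x i) = x i • (Pi.single i 1 : ι → ℝ) := by
    funext j
    by_cases hj : j = i
    · subst hj; simp
    · simp [Pi.single_apply, hj]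
  rw [h1, f.map_smul]
  simp

theorem minimax_aux (A : ι → κ → ℝ) :
    (⨅ p : ProbDist κ, ⨆ i : ι, ∑ π : κ, p.1 π * A i π)
      ≤ ⨆ ν : ProbDist ι, ⨅ π : κ, ∑ i, ν.1 i * A i π := by
  classical
  set C : ℝ := ∑ i, ∑ π, |A i π| with hC
  have hCb : ∀ i π, |A i π| ≤ C := by
    intro i π
    calc |A i π| ≤ ∑ π', |A i π'| :=
          Finset.single_le_sum (f := fun π' => |A i π'|)
            (fun π' _ => abs_nonneg _) (Finset.mem_univ π)
      _ ≤ C := Finset.single_le_sum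
          (f := fun i' => ∑ π', |A i' π'|)
          (fun i' _ => Finset.sum_nonneg fun π' _ => abs_nonneg _) (Finset.mem_univ i)
  set v : ℝ := ⨆ ν : ProbDist ι, ⨅ π : κ, ∑ i, ν.1 i * A i π with hv
  have hbddA : BddAbove (Set.range fun ν : ProbDist ι => ⨅ π : κ, ∑ i, ν.1 i * A i π) := by
    refine ⟨C, ?_⟩
    rintro x ⟨ν, rfl⟩
    calc (⨅ π : κ, ∑ i, ν.1 i * A i π) ≤ ∑ i, ν.1 i * A i (Classical.arbitrary κ) :=
          ciInf_le (Set.Finite.bddBelow (Set.finite_range _)) _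
      _ ≤ C := weighted_le ν.1 ν.2.1 ν.2.2 fun i => (le_abs_self _).trans (hCb i _)
  have key : ∀ ε : ℝ, 0 < ε → ∃ p : ProbDist κ, ∀ i, ∑ π, p.1 π * A i π ≤ v + ε := by
    intro ε hε
    by_contra hcon
    push_neg at hcon
    set L : (κ → ℝ) → (ι → ℝ) := fun pf => fun i => ∑ π, pf π * A i π with hL
    have hLcont : Continuous L := by
      refine continuous_pi fun i => ?_
      exact continuous_finset_sum _ fun π _ => (continuous_apply π).mul continuous_const
    set S : Set (ι → ℝ) := L '' stdSimplex ℝ κ with hS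
    have hScomp : IsCompact S := (isCompact_stdSimplex ℝ κ).image hLcont
    have hSconv : Convex ℝ S := by
      rintro x ⟨pf, hpf, rfl⟩ y ⟨qf, hqf, rfl⟩ s t hs ht hst
      refine ⟨s • pf + t • qf, convex_stdSimplex ℝ κ hpf hqf hs ht hst, ?_⟩
      funext i
      simp only [hL, Pi.add_apply, Pi.smul_apply, smul_eq_mul]
      rw [Finset.mul_sum, Finset.mul_sum, ← Finset.sum_add_distrib]
      exact Finset.sum_congr rfl fun π _ => by ring
    set E : Set (ι → ℝ) := {x | ∀ i, x i ≤ v + ε} with hE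
    have hEconv : Convex ℝ E := by
      rintro x hx y hy s t hs ht hst i
      simp only [Pi.add_apply, Pi.smul_apply, smul_eq_mul]
      calc s * x i + t * y i ≤ s * (v + ε) + t * (v + ε) := by
            have h1 : s * x i ≤ s * (v + ε) := mul_le_mul_of_nonneg_left (hx i) hs
            have h2 : t * y i ≤ t * (v + ε) := mul_le_mul_of_nonneg_left (hy i) ht
            linarith
        _ = v + ε := by rw [← add_mul, hst, one_mul]
    have hEclosed : IsClosed E := by
      have hrw : E = ⋂ i, (fun x : ι → ℝ => x i) ⁻¹' Set.Iic (v + ε) := by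
        ext x; simp [hE, Set.mem_iInter]
      rw [hrw]
      exact isClosed_iInter fun i => IsClosed.preimage (continuous_apply i) isClosed_Iic
    have hdisj : Disjoint S E := by
      rw [Set.disjoint_left]
      rintro x ⟨pf, hpf, rfl⟩ hxE
      obtain ⟨i, hi⟩ := hcon ⟨pf, hpf.1, hpf.2⟩
      exact absurd (hxE i) (not_le.mpr hi)
    obtain ⟨f, u, w', hfS, huw, hfE⟩ :=
      geometric_hahn_banach_compact_closed hSconv hScomp hEconv hEclosed hdisj
    set νf : ι → ℝ := fun i => -(f (Pi.single i 1)) with hνf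
    have hconstE : (fun _ : ι => v + ε) ∈ E := fun i => le_rfl
    have hν0 : ∀ i, 0 ≤ νf i := by
      intro i
      by_contra hneg
      push_neg at hneg
      have hs0 : 0 < f (Pi.single i 1) := by
        have h := hneg
        rw [hνf] at h
        simpa using h
      have hfc : w' < f (fun _ => v + ε) := hfE _ hconstE
      have h2 : 0 < f (fun _ => v + ε) - w' := by linarith
      have hkey : ∀ t : ℝ, 0 ≤ t →
          w' < f (fun _ => v + ε) - t * f (Pi.single i 1) := by
        intro t ht
        have hyE : ((fun _ : ι => v + ε) - t • (Pi.single i 1 : ι → ℝ)) ∈ E := by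
          intro i'
          simp only [Pi.sub_apply, Pi.smul_apply, smul_eq_mul]
          by_cases hii : i' = i
          · subst hii
            rw [Pi.single_eq_same]
            nlinarith
          · rw [Pi.single_eq_of_ne hii]
            simp
        have hlt := hfE _ hyE
        rw [map_sub, f.map_smul] at hlt
        simpa using hlt
      have ht0 : (0:ℝ) ≤ (f (fun _ => v + ε) - w') / f (Pi.single i 1) :=
        (div_pos h2 hs0).le
      have hfin := hkey _ ht0
      have hmul : (f (fun _ => v + ε) - w') / f (Pi.single i 1) * f (Pi.single i 1)
          = f (fun _ => v + ε) - w' := div_mul_cancel₀ _ hs0.ne'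
      linarith
    have hνsum : 0 < ∑ i, νf i := by
      rcases lt_or_ge 0 (∑ i, νf i) with h | h
      · exact h
      · exfalso
        have h1 : ∑ i, νf i = 0 :=
          le_antisymm h (Finset.sum_nonneg fun i _ => hν0 i)
        have hall := (Finset.sum_eq_zero_iff_of_nonneg fun i (_ : i ∈ Finset.univ) => hν0 i).1 h1
        have hf0 : ∀ x : ι → ℝ, f x = 0 := by
          intro x
          rw [pi_decomp f x]
          refine Finset.sum_eq_zero fun i _ => ?_
          have h2 : νf i = 0 := hall i (Finset.mem_univ i)
          have h3 : f (Pi.single i 1) = 0 := by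
            have : νf i = -(f (Pi.single i 1)) := rfl
            linarith [this ▸ h2]
          rw [h3, mul_zero]
        obtain ⟨p0⟩ := (inferInstance : Nonempty (ProbDist κ))
        have hx0 : L p0.1 ∈ S := ⟨p0.1, ⟨p0.2.1, p0.2.2⟩, rfl⟩
        have hl1 := hfS _ hx0
        have hl2 := hfE _ hconstE
        rw [hf0] at hl1
        rw [hf0] at hl2
        linarith
    have hcol : ∀ π : κ, (v + ε) * (∑ i, νf i) < ∑ i, νf i * A i π := by
      intro π
      have hmem : (fun π' => if π' = π then (1:ℝ) else 0) ∈ stdSimplex ℝ κ := by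
        constructor
        · intro π'; by_cases h : π' = π <;> simp [h]
        · simp
      have hxcol : L (fun π' => if π' = π then (1:ℝ) else 0) ∈ S := ⟨_, hmem, rfl⟩
      have hLcol : L (fun π' => if π' = π then (1:ℝ) else 0) = fun i => A i π := by
        funext i
        simp only [hL]
        rw [Finset.sum_congr rfl (fun π' (_ : π' ∈ Finset.univ) =>
          (ite_mul (π' = π) (1:ℝ) 0 (A i π')).trans (by rw [one_mul, zero_mul]))]
        rw [Finset.sum_ite_eq' Finset.univ π (fun π' => A i π')]
        simp
      have h1 := hfS _ hxcol
      rw [hLcol] at h1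
      have h2 := hfE _ hconstE
      rw [pi_decomp f (fun i => A i π)] at h1
      rw [pi_decomp f (fun _ => v + ε)] at h2
      have h1' : ∑ i, A i π * f (Pi.single i 1) = -∑ i, νf i * A i π := by
        rw [← Finset.sum_neg_distrib]
        refine Finset.sum_congr rfl fun i _ => ?_
        have : νf i = -(f (Pi.single i 1)) := rfl
        rw [this]; ring
      have h2' : ∑ i, (v + ε) * f (Pi.single i 1) = -((v + ε) * ∑ i, νf i) := by
        rw [Finset.mul_sum, ← Finset.sum_neg_distrib]
        refine Finset.sum_congr rfl fun i _ => ?_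
        have : νf i = -(f (Pi.single i 1)) := rfl
        rw [this]; ring
      rw [h1'] at h1
      rw [h2'] at h2
      linarith
    have hν1 : ∀ i, 0 ≤ νf i / ∑ j, νf j := fun i => div_nonneg (hν0 i) hνsum.le
    have hν2 : ∑ i, νf i / ∑ j, νf j = 1 := by
      rw [← Finset.sum_div, div_self hνsum.ne']
    set νp : ProbDist ι := ⟨fun i => νf i / ∑ j, νf j, hν1, hν2⟩ with hνp
    have hinf : v + ε ≤ ⨅ π : κ, ∑ i, νp.1 i * A i π := by
      refine le_ciInf fun π => ?_
      have hc := hcol π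
      have hdiv : ∑ i, νp.1 i * A i π = (∑ i, νf i * A i π) / ∑ j, νf j := by
        rw [Finset.sum_div]
        exact Finset.sum_congr rfl fun i _ => by
          show νf i / (∑ j, νf j) * A i π = νf i * A i π / ∑ j, νf j
          ring
      rw [hdiv, le_div_iff₀ hνsum]
      linarith
    have hle : (⨅ π : κ, ∑ i, νp.1 i * A i π) ≤ v := le_ciSup hbddA νp
    linarith
  have hbddB : BddBelow (Set.range fun p : ProbDist κ => ⨆ i : ι, ∑ π, p.1 π * A i π) := by
    refine ⟨-C, ?_⟩
    rintro x ⟨p, rfl⟩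
    have h0 : -C ≤ ∑ π, p.1 π * A (Classical.arbitrary ι) π :=
      le_weighted p.1 p.2.1 p.2.2 fun π => by
        have h1 := hCb (Classical.arbitrary ι) π
        have h2 := neg_abs_le (A (Classical.arbitrary ι) π)
        linarith
    exact h0.trans (le_ciSup (f := fun i : ι => ∑ π, p.1 π * A i π)
      (Set.Finite.bddAbove (Set.finite_range _)) (Classical.arbitrary ι))
  have hfin : ∀ ε : ℝ, 0 < ε →
      (⨅ p : ProbDist κ, ⨆ i : ι, ∑ π : κ, p.1 π * A i π) ≤ v + ε := by
    intro ε hε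
    obtain ⟨p, hp⟩ := key ε hε
    exact ciInf_le_of_le hbddB p (ciSup_le fun i => hp i)
  exact le_of_forall_pos_le_add hfin

end Minimax

variable [Fintype Pol] {ι : Type*} [Fintype ι]

/-- The Decision-Estimation Coefficient `dec_γ(𝓜, μ̄)` of the model class
`𝓜 = {Mdl i}` with optimal policies `πopt i`, with respect to `μ̄ ∈ Δ(𝓜)`. -/
def dec (γ : ℝ) (Mdl : ι → Model O H Pol) (πopt : ι → Pol) (μbar : ProbDist ι) : ℝ :=
  ⨅ p : ProbDist Pol, ⨆ i : ι, ∑ π, p.1 π * ∑ j, μbar.1 j *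
    ((Mdl i).val (πopt i) - (Mdl i).val π - γ * DRL2 (Mdl i) (Mdl j) π)

/-- `dec̄_γ(𝓜) = sup_{μ̄∈Δ(𝓜)} dec_γ(𝓜, μ̄)`. -/
def decBar (γ : ℝ) (Mdl : ι → Model O H Pol) (πopt : ι → Pol) : ℝ :=
  ⨆ μbar : ProbDist ι, dec γ Mdl πopt μbar

/-- The Posterior Sampling Coefficient `psc_γ(𝓜, M̄)` with respect to the reference model
`M̄ = Mdl jbar`. -/
def psc (γ : ℝ) (Mdl : ι → Model O H Pol) (πopt : ι → Pol) (jbar : ι) : ℝ :=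
  ⨆ μ : ProbDist ι, ∑ i, μ.1 i * ∑ i', μ.1 i' *
    ((Mdl i).val (πopt i) - (Mdl jbar).val (πopt i)
      - γ * DRL2 (Mdl jbar) (Mdl i) (πopt i'))

section SumHelpers

variable {κ : Type*} [Fintype κ]

lemma sum_mul_sub (w : κ → ℝ) (c : ℝ) (f g : κ → ℝ) :
    ∑ i, w i * (f i - c * g i) = (∑ i, w i * f i) - c * ∑ i, w i * g i := by
  rw [Finset.mul_sum, ← Finset.sum_sub_distrib]
  exact Finset.sum_congr rfl fun i _ => by ring

lemma sum_mul_sub1 (w f g : κ → ℝ) :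
    ∑ i, w i * (f i - g i) = (∑ i, w i * f i) - ∑ i, w i * g i := by
  rw [← Finset.sum_sub_distrib]
  exact Finset.sum_congr rfl fun i _ => by ring

lemma sum_mul_const (w : κ → ℝ) (hw1 : ∑ i, w i = 1) (c : ℝ) :
    ∑ i, w i * c = c := by
  rw [← Finset.sum_mul, hw1, one_mul]

lemma sum_mul_two (w f g : κ → ℝ) (c1 c2 : ℝ) :
    ∑ i, w i * (c1 * f i + c2 * g i) = c1 * (∑ i, w i * f i) + c2 * ∑ i, w i * g i := by
  rw [Finset.mul_sum, Finset.mul_sum, ← Finset.sum_add_distrib]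
  exact Finset.sum_congr rfl fun i _ => by ring

lemma sum_mul_add3 (w : κ → ℝ) (hw1 : ∑ i, w i = 1) (f g : κ → ℝ) (c1 c2 c0 : ℝ) :
    ∑ i, w i * (c1 * f i + c2 * g i + c0)
      = c1 * (∑ i, w i * f i) + c2 * (∑ i, w i * g i) + c0 := by
  have h1 : ∀ i, w i * (c1 * f i + c2 * g i + c0)
      = (c1 * (w i * f i) + c2 * (w i * g i)) + w i * c0 := fun i => by ring
  rw [Finset.sum_congr rfl fun i _ => h1 i, Finset.sum_add_distrib, sum_mul_const w hw1,
    Finset.sum_add_distrib, ← Finset.mul_sum, ← Finset.mul_sum]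

lemma double_swap (w : κ → ℝ) (f : κ → κ → ℝ) :
    ∑ i, w i * ∑ i', w i' * f i i' = ∑ i', w i' * ∑ i, w i * f i i' := by
  simp only [Finset.mul_sum]
  rw [Finset.sum_comm]
  refine Finset.sum_congr rfl fun i' _ => Finset.sum_congr rfl fun i _ => by ring

lemma triple_swap (u v m' : κ → ℝ) (D : κ → κ → κ → ℝ) :
    ∑ j, m' j * ∑ j', u j' * ∑ i, v i * D i j j'
      = ∑ j', u j' * ∑ i, v i * ∑ j, m' j * D i j j' := by
  simp only [Finset.mul_sum]
  rw [Finset.sum_comm]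
  refine Finset.sum_congr rfl fun j' _ => ?_
  rw [Finset.sum_comm]
  refine Finset.sum_congr rfl fun i _ => Finset.sum_congr rfl fun j _ => by ring

end SumHelpers

/-- Proposition (dec-to-psc): the DEC is bounded by the PSC plus a lower-order term,
`dec̄_γ(𝓜) ≤ max_{M̄∈𝓜} psc_{γ/6}(𝓜, M̄) + 2(H+1)/γ`. -/
theorem decBar_le_psc
    [Nonempty Pol] [Nonempty ι] (hH : 1 ≤ H)
    (Mdl : ι → Model O H Pol) (πopt : ι → Pol)
    (hπopt : ∀ (i : ι) (π : Pol), (Mdl i).val π ≤ (Mdl i).val (πopt i))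
    (γ : ℝ) (hγ : 0 < γ) :
    decBar γ Mdl πopt ≤ (⨆ jbar : ι, psc (γ / 6) Mdl πopt jbar) + 2 * (H + 1) / γ := by
  classical
  have hHpos : 0 < H := hH
  have hH1 : (1:ℝ) ≤ (H:ℝ) := by exact_mod_cast hH
  set γ' : ℝ := γ / 6 with hγ'def
  have hγ' : 0 < γ' := by positivity
  set ψ : ℝ := ⨆ jbar : ι, psc γ' Mdl πopt jbar with hψdef
  have hψub : ∀ jbar, psc γ' Mdl πopt jbar ≤ ψ := fun jbar =>
    le_ciSup (Set.Finite.bddAbove (Set.finite_range _)) jbar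
  -- it suffices to bound dec for each μbar
  refine ciSup_le fun μbar => ?_
  set m : ι → ℝ := μbar.1 with hm
  have hm0 : ∀ j, 0 ≤ m j := μbar.2.1
  have hm1 : ∑ j, m j = 1 := μbar.2.2
  set a : ι → ℝ := fun i => (Mdl i).val (πopt i) with ha
  set F : ι → Pol → ℝ := fun i π => (Mdl i).val π with hF
  set A : ι → Pol → ℝ := fun i π => ∑ j, m j *
    (a i - F i π - γ * DRL2 (Mdl i) (Mdl j) π) with hA
  have hdec : dec γ Mdl πopt μbar ≤ ⨆ ν : ProbDist ι, ⨅ π : Pol, ∑ i, ν.1 i * A i π :=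
    minimax_aux A
  refine le_trans hdec (ciSup_le fun ν => ?_)
  set w : ι → ℝ := ν.1 with hw
  have hw0 : ∀ i, 0 ≤ w i := ν.2.1
  have hw1 : ∑ i, w i = 1 := ν.2.2
  -- step 1 : inf over π ≤ average over πopt pushforward of ν
  have hstep1 : (⨅ π : Pol, ∑ i, w i * A i π)
      ≤ ∑ j', w j' * ∑ i, w i * A i (πopt j') := by
    refine le_weighted w hw0 hw1 fun j' => ?_
    exact ciInf_le (Set.Finite.bddBelow (Set.finite_range _)) (πopt j')
  refine le_trans hstep1 ?_
  -- abbreviations for divergences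
  set hl : ι → ι → Pol → ℝ := fun i k π =>
    hellingerSq ((Mdl i).P π) ((Mdl k).P π) with hhl
  set rr : ι → ι → Pol → ℝ := fun i k π =>
    ∫ o, (∑ h, ((Mdl i).R o h - (Mdl k).R o h) ^ 2) ∂((Mdl i).P π) with hrr
  have hDd : ∀ i k π, DRL2 (Mdl i) (Mdl k) π = hl i k π + rr i k π := fun i k π => rfl
  -- rewrite A
  have hArw : ∀ i π', A i π' = (a i - F i π') - γ * ∑ j, m j * DRL2 (Mdl i) (Mdl j) π' := by
    intro i π'
    simp only [hA]
    have h1 : ∀ j, m j * (a i - F i π' - γ * DRL2 (Mdl i) (Mdl j) π')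
        = m j * (a i - F i π') - γ * (m j * DRL2 (Mdl i) (Mdl j) π') := fun j => by ring
    rw [Finset.sum_congr rfl fun j _ => h1 j, Finset.sum_sub_distrib, ← Finset.mul_sum,
      sum_mul_const m hm1]
  -- decompose the double sum
  set T1 : ℝ := ∑ j', w j' * ∑ i, w i * (a i - F i (πopt j')) with hT1
  set X : ℝ := ∑ j', w j' * ∑ i, w i * ∑ j, m j * DRL2 (Mdl i) (Mdl j) (πopt j') with hX
  have hGsum : ∑ j', w j' * ∑ i, w i * A i (πopt j') = T1 - γ * X := by
    have hinner : ∀ j', ∑ i, w i * A i (πopt j')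
        = (∑ i, w i * (a i - F i (πopt j')))
          - γ * ∑ i, w i * ∑ j, m j * DRL2 (Mdl i) (Mdl j) (πopt j') := by
      intro j'
      rw [Finset.sum_congr rfl fun i _ => by rw [hArw i (πopt j')]]
      exact sum_mul_sub w γ _ _
    rw [Finset.sum_congr rfl fun j' _ => by rw [hinner j']]
    exact sum_mul_sub w γ _ _
  rw [hGsum]
  -- choose jbar
  obtain ⟨jbar, hjbar⟩ := exists_min_weighted m hm0 hm1
    (fun k => ∑ j', w j' * ∑ i, w i * DRL2 (Mdl i) (Mdl k) (πopt j'))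
  have hXswap : ∑ j, m j * ∑ j', w j' * ∑ i, w i * DRL2 (Mdl i) (Mdl j) (πopt j') = X := by
    rw [hX]
    exact triple_swap w w m (fun i j j' => DRL2 (Mdl i) (Mdl j) (πopt j'))
  rw [hXswap] at hjbar
  -- decompose T1 = S1 + S3
  set S1 : ℝ := ∑ i, w i * (a i - F jbar (πopt i)) with hS1
  set S3 : ℝ := ∑ j', w j' * ∑ i, w i * (F jbar (πopt j') - F i (πopt j')) with hS3
  have hT1split : T1 = S1 + S3 := by
    set Ta : ℝ := ∑ i, w i * a i with hTa
    set Tb : ℝ := ∑ i, w i * F jbar (πopt i) with hTb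
    set Tc : ℝ := ∑ j', w j' * ∑ i, w i * F i (πopt j') with hTc
    have e1 : T1 = Ta - Tc := by
      rw [hT1]
      have h1 : ∀ j', ∑ i, w i * (a i - F i (πopt j'))
          = Ta - ∑ i, w i * F i (πopt j') := fun j' => sum_mul_sub1 w _ _
      rw [Finset.sum_congr rfl fun j' _ => by rw [h1 j']]
      rw [sum_mul_sub1 w _ _, sum_mul_const w hw1]
    have e2 : S1 = Ta - Tb := sum_mul_sub1 w _ _
    have e3 : S3 = Tb - Tc := by
      rw [hS3]
      have h1 : ∀ j', ∑ i, w i * (F jbar (πopt j') - F i (πopt j'))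
          = F jbar (πopt j') - ∑ i, w i * F i (πopt j') := by
        intro j'
        rw [sum_mul_sub1 w _ _, sum_mul_const w hw1]
      rw [Finset.sum_congr rfl fun j' _ => by rw [h1 j']]
      rw [sum_mul_sub1 w _ _]
    rw [e1, e2, e3]; ring
  -- psc bound for S1
  set Y : ℝ := ∑ i, w i * ∑ i', w i' * DRL2 (Mdl jbar) (Mdl i) (πopt i') with hY
  have hS1psc : S1 ≤ ψ + γ' * Y := by
    have hbdd : BddAbove (Set.range fun μ : ProbDist ι => ∑ i, μ.1 i * ∑ i', μ.1 i' *
        (a i - F jbar (πopt i) - γ' * DRL2 (Mdl jbar) (Mdl i) (πopt i'))) := by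
      refine ⟨1, ?_⟩
      rintro x ⟨μ, rfl⟩
      refine weighted_le μ.1 μ.2.1 μ.2.2 fun i => ?_
      refine weighted_le μ.1 μ.2.1 μ.2.2 fun i' => ?_
      have h1 := (Mdl i).val_le_one (πopt i)
      have h2 := (Mdl jbar).val_nonneg (πopt i)
      have h3 := DRL2_nonneg (Mdl jbar) (Mdl i) (πopt i')
      have : 0 ≤ γ' * DRL2 (Mdl jbar) (Mdl i) (πopt i') := mul_nonneg hγ'.le h3
      simp only [ha, hF]
      linarith
    have hval : ∑ i, w i * ∑ i', w i' *
        (a i - F jbar (πopt i) - γ' * DRL2 (Mdl jbar) (Mdl i) (πopt i'))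
        ≤ psc γ' Mdl πopt jbar := by
      have := le_ciSup hbdd ν
      simpa [psc, ha, hF] using this
    have hexp : ∑ i, w i * ∑ i', w i' *
        (a i - F jbar (πopt i) - γ' * DRL2 (Mdl jbar) (Mdl i) (πopt i'))
        = S1 - γ' * Y := by
      have h1 : ∀ i, ∑ i', w i' *
          (a i - F jbar (πopt i) - γ' * DRL2 (Mdl jbar) (Mdl i) (πopt i'))
          = (a i - F jbar (πopt i)) - γ' * ∑ i', w i' * DRL2 (Mdl jbar) (Mdl i) (πopt i') := by
        intro i
        have := sum_mul_sub w γ' (fun _ => a i - F jbar (πopt i))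
          (fun i' => DRL2 (Mdl jbar) (Mdl i) (πopt i'))
        rw [this, sum_mul_const w hw1]
      rw [Finset.sum_congr rfl fun i _ => by rw [h1 i]]
      exact sum_mul_sub w γ' _ _
    have := hexp ▸ hval
    have h2 := hψub jbar
    linarith
  -- bound Y pointwise
  set Zh : ℝ := ∑ j', w j' * ∑ i, w i * hl i jbar (πopt j') with hZh
  set Zr : ℝ := ∑ j', w j' * ∑ i, w i * rr i jbar (πopt j') with hZr
  have hYb : Y ≤ 4 * Zh + 3 * Zr := by
    have hpt : ∀ i i', DRL2 (Mdl jbar) (Mdl i) (πopt i')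
        ≤ 4 * hl i jbar (πopt i') + 3 * rr i jbar (πopt i') := by
      intro i i'
      have h1 := rev_reward_le (Mdl i) (Mdl jbar) (πopt i')
      have h2 := hellingerSq_comm ((Mdl i).P (πopt i')) ((Mdl jbar).P (πopt i'))
      have h3 : DRL2 (Mdl jbar) (Mdl i) (πopt i')
          = hellingerSq ((Mdl jbar).P (πopt i')) ((Mdl i).P (πopt i'))
            + ∫ o, (∑ h, ((Mdl jbar).R o h - (Mdl i).R o h) ^ 2) ∂((Mdl jbar).P (πopt i')) := rfl
      rw [h3, ← h2]
      simp only [hhl, hrr]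
      linarith
    have hY4 : Y ≤ ∑ i, w i * ∑ i', w i' *
        (4 * hl i jbar (πopt i') + 3 * rr i jbar (πopt i')) := by
      rw [hY]
      refine Finset.sum_le_sum fun i _ => mul_le_mul_of_nonneg_left ?_ (hw0 i)
      exact Finset.sum_le_sum fun i' _ => mul_le_mul_of_nonneg_left (hpt i i') (hw0 i')
    have hswap : ∑ i, w i * ∑ i', w i' *
        (4 * hl i jbar (πopt i') + 3 * rr i jbar (πopt i'))
        = ∑ i', w i' * ∑ i, w i *
          (4 * hl i jbar (πopt i') + 3 * rr i jbar (πopt i')) :=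
      double_swap w _
    have hcollect : ∑ i', w i' * ∑ i, w i *
        (4 * hl i jbar (πopt i') + 3 * rr i jbar (πopt i'))
        = 4 * Zh + 3 * Zr := by
      have h1 : ∀ i', ∑ i, w i * (4 * hl i jbar (πopt i') + 3 * rr i jbar (πopt i'))
          = 4 * (∑ i, w i * hl i jbar (πopt i')) + 3 * ∑ i, w i * rr i jbar (πopt i') :=
        fun i' => sum_mul_two w _ _ 4 3
      rw [Finset.sum_congr rfl fun i' _ => by rw [h1 i']]
      exact sum_mul_two w _ _ 4 3
    rw [hswap, hcollect] at hY4
    exact hY4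
  -- bound S3
  have hS3b : S3 ≤ (γ/2) * Zr + (γ/3) * Zh + ((H:ℝ)/(2*γ) + 3/γ) := by
    have hpt : ∀ i j', F jbar (πopt j') - F i (πopt j')
        ≤ (γ/2) * rr i jbar (πopt j') + (γ/3) * hl i jbar (πopt j')
          + ((H:ℝ)/(2*γ) + 3/γ) := by
      intro i j'
      have h1 := val_diff_le (Mdl i) (Mdl jbar) (πopt j') hHpos
        (αr := γ/2) (αh := γ/3) (by positivity) (by positivity)
      have e1 : (H:ℝ)/(4*(γ/2)) = (H:ℝ)/(2*γ) := by
        have : 4*(γ/2) = 2*γ := by ring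
        rw [this]
      have e2 : 1/(γ/3) = 3/γ := one_div_div γ 3
      simp only [hF, hhl, hrr]
      rw [e1] at h1
      rw [e2] at h1
      linarith
    have hin : ∀ j', ∑ i, w i * (F jbar (πopt j') - F i (πopt j'))
        ≤ (γ/2) * (∑ i, w i * rr i jbar (πopt j'))
          + (γ/3) * (∑ i, w i * hl i jbar (πopt j')) + ((H:ℝ)/(2*γ) + 3/γ) := by
      intro j'
      calc ∑ i, w i * (F jbar (πopt j') - F i (πopt j'))
          ≤ ∑ i, w i * ((γ/2) * rr i jbar (πopt j') + (γ/3) * hl i jbar (πopt j')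
              + ((H:ℝ)/(2*γ) + 3/γ)) :=
            Finset.sum_le_sum fun i _ => mul_le_mul_of_nonneg_left (hpt i j') (hw0 i)
        _ = (γ/2) * (∑ i, w i * rr i jbar (πopt j'))
              + (γ/3) * (∑ i, w i * hl i jbar (πopt j')) + ((H:ℝ)/(2*γ) + 3/γ) :=
            sum_mul_add3 w hw1 _ _ _ _ _
    calc S3 ≤ ∑ j', w j' * ((γ/2) * (∑ i, w i * rr i jbar (πopt j'))
          + (γ/3) * (∑ i, w i * hl i jbar (πopt j')) + ((H:ℝ)/(2*γ) + 3/γ)) := by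
          rw [hS3]
          exact Finset.sum_le_sum fun j' _ => mul_le_mul_of_nonneg_left (hin j') (hw0 j')
      _ = (γ/2) * Zr + (γ/3) * Zh + ((H:ℝ)/(2*γ) + 3/γ) := sum_mul_add3 w hw1 _ _ _ _ _
  -- merge Zh + Zr = Φ(jbar)
  have hZsum : Zh + Zr = ∑ j', w j' * ∑ i, w i * DRL2 (Mdl i) (Mdl jbar) (πopt j') := by
    rw [hZh, hZr, ← Finset.sum_add_distrib]
    refine Finset.sum_congr rfl fun j' _ => ?_
    rw [← mul_add, ← Finset.sum_add_distrib]
    congr 1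
    exact Finset.sum_congr rfl fun i _ => by rw [← mul_add, hDd i jbar (πopt j')]
  -- final arithmetic
  have hfinal : T1 - γ * X ≤ ψ + ((H:ℝ)/(2*γ) + 3/γ) := by
    have h1 : γ' * Y ≤ γ' * (4 * Zh + 3 * Zr) := mul_le_mul_of_nonneg_left hYb hγ'.le
    have h2 : γ' * (4 * Zh + 3 * Zr) + ((γ/2) * Zr + (γ/3) * Zh) = γ * (Zh + Zr) := by
      rw [hγ'def]; ring
    have h3 : γ * (Zh + Zr) ≤ γ * X := by
      refine mul_le_mul_of_nonneg_left ?_ hγ.le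
      rw [hZsum]
      exact hjbar
    linarith [hS1psc, hS3b, hT1split]
  refine le_trans hfinal ?_
  have hslack : (H:ℝ)/(2*γ) + 3/γ ≤ 2 * ((H:ℝ) + 1) / γ := by
    rw [div_add_div _ _ (by positivity : (2*γ) ≠ 0) (by positivity : γ ≠ 0),
      div_le_div_iff₀ (by positivity) (by positivity)]
    have h2 : 0 < γ * γ := mul_pos hγ hγ
    nlinarith [h2, hH1]
  linarith [hslack]
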